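/- arXiv:1111.3760 — 5 statements merged into one kernel-verified Lean document; each statement's English description precedes it below -/
import Mathlib

section
/- Let H be a subgroup of a group G and suppose f(h,g) ≠ 0 for all h ∈ H and g ∈ G. Then A_H(f,t) is a (two-sided) ideal of A_G(f,t) if and only if H = G. -/
open Finsupp

/-- Multiplication of the algebra `A_G(f,t)`: `e_a e_b = f(a,b) e_{a∘b∘t}`. -/
noncomputable def mulG {K G : Type*} [Field K] [Group G] (f : G → G → K) (t : G)
    (x y : G →₀ K) : G →₀ K :=
  x.sum fun a xa => y.sum fun b yb => Finsupp.single (a * b * t) (xa * yb * f a b)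

theorem Finsupp.single_mem_supported_iff {α M R : Type*} [Semiring R] [AddCommMonoid M]
    [Module R M] {s : Set α} {a : α} {b : M} (hb : b ≠ 0) :
    single a b ∈ supported M R s ↔ a ∈ s := by
  rw [mem_supported, support_single _ hb, Finset.coe_singleton,
    Set.singleton_subset_iff]

theorem mulG_single_single {K G : Type*} [Field K] [Group G] (f : G → G → K) (t a b : G)
    (r s : K) : mulG f t (single a r) (single b s) = single (a * b * t) (r * s * f a b) := by
  simp [mulG, sum_single_index]

/-- if `f(h,g) ≠ 0` for all `h ∈ H`, `g ∈ G`, then `A_H(f,t)` is a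
two-sided ideal of `A_G(f,t)` iff `H = G`. -/
theorem stmt2 {K G : Type*} [Field K] [Group G] (f : G → G → K) (t : G)
    (H : Subgroup G) (hf : ∀ h ∈ H, ∀ g : G, f h g ≠ 0) :
    (∀ x y : G →₀ K,
        x ∈ Submodule.span K ((fun a : G => Finsupp.single a (1 : K)) '' (H : Set G)) →
        mulG f t x y ∈
          Submodule.span K ((fun a : G => Finsupp.single a (1 : K)) '' (H : Set G)) ∧
        mulG f t y x ∈
          Submodule.span K ((fun a : G => Finsupp.single a (1 : K)) '' (H : Set G)))
      ↔ H = ⊤ := by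
  rw [← supported_eq_span_single]
  refine ⟨fun hideal => eq_top_iff.2 fun g _ => ?_, ?_⟩
  · -- `e_1 e_{g t⁻¹} = f(1, g t⁻¹) e_g`, and this coefficient is nonzero.
    have hprod := (hideal _ (single (g * t⁻¹) 1) (single_mem_supported K 1 H.one_mem)).1
    rw [mulG_single_single, one_mul, inv_mul_cancel_right, one_mul, one_mul] at hprod
    exact (single_mem_supported_iff (hf 1 H.one_mem _)).1 hprod
  · rintro rfl x y -
    simp [supported_univ]
end

section
/- Let G be an additive group, t, t′ ∈ G, and f a solution of the functional equation f(b,c)f(a,b+c+t) = f(a,b)f(a+b+t,c) − f(a,c)f(a+c+t,b). Define g(a,b) := f(a−(t−t′), b−(t−t′)). Then g satisfies the same functional equation with t replaced by t′, and the map φ(e_i) = e′_{i+t−t′} is an algebra isomorphism from L(f,t) to L(g,t′). -/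
/-!
Translating every index by `d` carries `e_a e_b = f(a,b) e_{a+b+t}` to
`e_{a+d} e_{b+d} = f(a,b) e_{(a+d)+(b+d)+(t-d)}`, which is the bracket of `L(g, t - d)` with
`g(a,b) = f(a-d, b-d)`; the functional equation transforms the same way.
-/

open Finsupp

/-- Multiplication of the algebra `L(f,t)`: `e_a e_b = f(a,b) e_{a+b+t}`. -/
noncomputable def mulA {K G : Type*} [Field K] [AddCommGroup G] (f : G → G → K) (t : G)
    (x y : G →₀ K) : G →₀ K :=
  x.sum fun a xa => y.sum fun b yb => Finsupp.single (a + b + t) (xa * yb * f a b)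

/-- The shifted structure function `g(a,b) = f(a − d, b − d)`. -/
def shiftF {K G : Type*} [AddCommGroup G] (f : G → G → K) (d : G) : G → G → K :=
  fun a b => f (a - d) (b - d)

/-- The linear map `φ(e_i) = e_{i + d}`. -/
noncomputable def shiftMap {K G : Type*} [Field K] [AddCommGroup G] (d : G) :
    (G →₀ K) → (G →₀ K) :=
  fun x => Finsupp.equivMapDomain (Equiv.addRight d) x

/-- `f ∈ F_t`: the identity on `f` making `L(f,t)` a Leibniz algebra. -/
def IsStructureFunction {R G : Type*} [Ring R] [AddCommGroup G] (f : G → G → R) (t : G) :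
    Prop :=
  ∀ a b c : G, f b c * f a (b + c + t) = f a b * f (a + b + t) c - f a c * f (a + c + t) b

theorem IsStructureFunction.shiftF {R G : Type*} [Ring R] [AddCommGroup G] {f : G → G → R}
    {t : G} (hf : IsStructureFunction f t) (d : G) : IsStructureFunction (shiftF f d) (t - d) := by
  intro a b c
  have shift_index : ∀ x y : G, x + y + (t - d) - d = (x - d) + (y - d) + t := by
    intro x y; abel
  simpa only [_root_.shiftF, shift_index] using hf (a - d) (b - d) (c - d)

section shiftMap

variable {K G : Type*} [Field K] [AddCommGroup G]

theorem shiftMap_eq_domLCongr (d : G) :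
    (shiftMap d : (G →₀ K) → (G →₀ K)) = Finsupp.domLCongr (R := K) (Equiv.addRight d) :=
  rfl

theorem shiftMap_single (d a : G) (c : K) : shiftMap d (single a c) = single (a + d) c :=
  equivMapDomain_single _ _ _

theorem shiftMap_sum (d : G) (z : G →₀ K) (g : G → K → G →₀ K) :
    shiftMap d (z.sum g) = z.sum fun a c => shiftMap d (g a c) := by
  rw [shiftMap_eq_domLCongr]
  exact map_finsuppSum _ z g

theorem shiftMap_mulA (f : G → G → K) (t d : G) (x y : G →₀ K) :
    shiftMap d (mulA f t x y) = mulA (shiftF f d) (t - d) (shiftMap d x) (shiftMap d y) := by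
  simp only [mulA, shiftMap_sum, shiftMap_single]
  simp only [shiftMap, sum_equivMapDomain]
  refine sum_congr fun a _ => sum_congr fun b _ => ?_
  have shift_index : a + d + (b + d) + (t - d) = a + b + t + d := by abel
  simp only [shift_index, _root_.shiftF, Equiv.coe_addRight, add_sub_cancel_right]

end shiftMap

/-- if `f ∈ F_t` then `g(a,b) := f(a−(t−t'), b−(t−t')) ∈ F_{t'}` and
`φ(e_i) = e_{i+t−t'}` is an algebra isomorphism `L(f,t) ≅ L(g,t')`. -/
theorem stmt7 {K G : Type*} [Field K] [AddCommGroup G] (f : G → G → K) (t t' : G)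
    (hf : ∀ a b c : G,
      f b c * f a (b + c + t) = f a b * f (a + b + t) c - f a c * f (a + c + t) b) :
    (∀ a b c : G,
        shiftF f (t - t') b c * shiftF f (t - t') a (b + c + t') =
          shiftF f (t - t') a b * shiftF f (t - t') (a + b + t') c -
            shiftF f (t - t') a c * shiftF f (t - t') (a + c + t') b) ∧
    Function.Bijective (shiftMap (t - t') : (G →₀ K) → (G →₀ K)) ∧
    (∀ x y : G →₀ K, shiftMap (t - t') (x + y) = shiftMap (t - t') x + shiftMap (t - t') y) ∧
    (∀ (c : K) (x : G →₀ K), shiftMap (t - t') (c • x) = c • shiftMap (t - t') x) ∧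
    (∀ x y : G →₀ K,
        shiftMap (t - t') (mulA f t x y) =
          mulA (shiftF f (t - t')) t' (shiftMap (t - t') x) (shiftMap (t - t') y)) := by
  have hg : IsStructureFunction (shiftF f (t - t')) t' := by
    simpa only [sub_sub_cancel] using IsStructureFunction.shiftF hf (t - t')
  refine ⟨hg, ?_, ?_, ?_, fun x y => ?_⟩
  · rw [shiftMap_eq_domLCongr]; exact LinearEquiv.bijective _
  · rw [shiftMap_eq_domLCongr]; exact map_add _
  · rw [shiftMap_eq_domLCongr]; exact map_smul _
  · simpa only [sub_sub_cancel] using shiftMap_mulA f t (t - t') x y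
end

section
/- Over the group ℤ₂ = {0̄, 1̄} with t = 0̄, a function f : ℤ₂ × ℤ₂ → K makes A_{ℤ₂}(f, 0̄) a Leibniz algebra (i.e., f solves the functional equation f(b,c)f(a,b+c) = f(a,b)f(a+b,c) − f(a,c)f(a+c,b)) if and only if the matrix (f(a,b)) is one of: [[0,0],[α,0]], [[0,−α],[α,0]], or [[0,0],[0,α]] for some α ∈ K. -/
/-!
Taking `a = b = c = 0` gives `f(0̄,0̄)² = 0`. Once `f(0̄,0̄) = 0`, the eight instances of the equation
over `ℤ₂` reduce to three relations between `x = f(0̄,1̄)`, `y = f(1̄,0̄)`, `z = f(1̄,1̄)`: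
`x (x + y) = 0`, `z (x - y) = 0` and `z y = 0`. In a field, either `z = 0` and `x ∈ {0, -y}`,
or `z ≠ 0` and `x = y = 0`: these are the three matrix families.
-/

def LeibnizEq {G K : Type*} [Add G] [Ring K] (f : G → G → K) : Prop :=
  ∀ a b c : G, f b c * f a (b + c) = f a b * f (a + b) c - f a c * f (a + c) b

theorem LeibnizEq.map_zero_zero {G K : Type*} [AddZeroClass G] [Ring K] [IsReduced K]
    {f : G → G → K} (hf : LeibnizEq f) : f 0 0 = 0 :=
  IsReduced.eq_zero _ ⟨2, by simpa [pow_two] using hf 0 0 0⟩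

theorem leibnizEq_zmod_two_iff {K : Type*} [CommRing K] [IsReduced K] {f : ZMod 2 → ZMod 2 → K} :
    LeibnizEq f ↔ f 0 0 = 0 ∧ f 0 1 * (f 0 1 + f 1 0) = 0 ∧ f 1 1 * (f 0 1 - f 1 0) = 0 ∧
      f 1 1 * f 1 0 = 0 := by
  have one_add_one : (1 + 1 : ZMod 2) = 0 := rfl
  constructor
  · intro hf
    have h00 := hf.map_zero_zero
    have h001 := hf 0 0 1
    have h101 := hf 1 0 1
    have h111 := hf 1 1 1
    simp only [add_zero, zero_add, one_add_one, h00] at h001 h101 h111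
    exact ⟨h00, by linear_combination h001, by linear_combination h101, by linear_combination h111⟩
  · rintro ⟨h00, hx, hz, hzy⟩ a b c
    have zmod_two_cases : ∀ x : ZMod 2, x = 0 ∨ x = 1 := by decide
    rcases zmod_two_cases a with rfl | rfl <;> rcases zmod_two_cases b with rfl | rfl <;>
      rcases zmod_two_cases c with rfl | rfl <;>
      simp only [add_zero, zero_add, one_add_one, h00] <;> grind

/-- over `ℤ₂` with `t = 0̄`, `f` solves the Leibniz functional equation
iff its matrix is one of `[[0,0],[α,0]]`, `[[0,−α],[α,0]]`, `[[0,0],[0,α]]`. -/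
theorem stmt10 {K : Type*} [Field K] (f : ZMod 2 → ZMod 2 → K) :
    (∀ a b c : ZMod 2,
        f b c * f a (b + c) = f a b * f (a + b) c - f a c * f (a + c) b) ↔
      ((∃ α : K, f 0 0 = 0 ∧ f 0 1 = 0 ∧ f 1 0 = α ∧ f 1 1 = 0) ∨
        (∃ α : K, f 0 0 = 0 ∧ f 0 1 = -α ∧ f 1 0 = α ∧ f 1 1 = 0) ∨
        (∃ α : K, f 0 0 = 0 ∧ f 0 1 = 0 ∧ f 1 0 = 0 ∧ f 1 1 = α)) := by
  change LeibnizEq f ↔ _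
  rw [leibnizEq_zmod_two_iff]
  constructor
  · rintro ⟨h00, hx, hz, hzy⟩
    by_cases h11 : f 1 1 = 0
    · rcases mul_eq_zero.mp hx with h01 | h01
      · exact Or.inl ⟨f 1 0, h00, h01, rfl, h11⟩
      · exact Or.inr <| Or.inl ⟨f 1 0, h00, eq_neg_of_add_eq_zero_left h01, rfl, h11⟩
    · have h10 : f 1 0 = 0 := (mul_eq_zero.mp hzy).resolve_left h11
      have h01 : f 0 1 = 0 := by simpa [h10, h11] using hz
      exact Or.inr <| Or.inr ⟨f 1 1, h00, h01, h10, rfl⟩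
  · rintro (⟨α, h00, h01, h10, h11⟩ | ⟨α, h00, h01, h10, h11⟩ | ⟨α, h00, h01, h10, h11⟩) <;>
      simp [h00, h01, h10, h11]
end

section
/- The three 2ℤ-periodic Leibniz algebras L₁: e_{2k−1}e_{2m} = e_{2(k+m)−1}; L₂: e_{2k}e_{2m−1} = −e_{2(k+m)−1}, e_{2k−1}e_{2m} = e_{2(k+m)−1}; and L₃: e_{2k−1}e_{2m−1} = e_{2(k+m−1)} (all other products zero) are pairwise non-isomorphic. -/
/-!
An isomorphism of algebras transports every identity of the form `y x = ε (x y)`.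
`L₃` is commutative and `L₂` is anticommutative, whereas in `L₁` we have `e₁ e₀ = e₁`
but `e₀ e₁ = 0`; and `L₂` is not commutative, because `e₁ e₀ = e₁ = -(e₀ e₁)` and `2 ≠ 0`.
-/

open Finsupp

/-- Multiplication with structure constants `c`: `e_a e_b = c(a,b) e_{a+b}`. -/
noncomputable def mulZ {K : Type*} [Field K] (c : ℤ → ℤ → K) (x y : ℤ →₀ K) : ℤ →₀ K :=
  x.sum fun a xa => y.sum fun b yb => Finsupp.single (a + b) (xa * yb * c a b)

/-- `L₁ : e_{2k−1} e_{2m} = e_{2(k+m)−1}`, all other products zero. -/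
def c1 (K : Type*) [Field K] : ℤ → ℤ → K :=
  fun a b => if a % 2 = 1 ∧ b % 2 = 0 then 1 else 0

/-- `L₂ : e_{2k} e_{2m−1} = −e_{2(k+m)−1}`, `e_{2k−1} e_{2m} = e_{2(k+m)−1}`. -/
def c2 (K : Type*) [Field K] : ℤ → ℤ → K :=
  fun a b =>
    if a % 2 = 0 ∧ b % 2 = 1 then -1 else if a % 2 = 1 ∧ b % 2 = 0 then 1 else 0

/-- `L₃ : e_{2k−1} e_{2m−1} = e_{2(k+m−1)}`, all other products zero. -/
def c3 (K : Type*) [Field K] : ℤ → ℤ → K :=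
  fun a b => if a % 2 = 1 ∧ b % 2 = 1 then 1 else 0

section

variable {K : Type*} [Field K]

lemma mulZ_single (c : ℤ → ℤ → K) (a b : ℤ) (x y : K) :
    mulZ c (single a x) (single b y) = single (a + b) (x * y * c a b) := by
  unfold mulZ
  rw [sum_single_index, sum_single_index] <;> simp

lemma mulZ_swap {c : ℤ → ℤ → K} {ε : K} (hc : ∀ a b, c b a = ε * c a b) (x y : ℤ →₀ K) :
    mulZ c y x = ε • mulZ c x y := by
  unfold mulZ
  rw [sum_comm, smul_sum]
  refine sum_congr fun a _ => ?_
  rw [smul_sum]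
  refine sum_congr fun b _ => ?_
  rw [smul_single, hc, add_comm b a]
  ring_nf

lemma swap_eq_mul_of_mulZ_linearEquiv {c c' : ℤ → ℤ → K} {ε : K}
    (φ : (ℤ →₀ K) ≃ₗ[K] (ℤ →₀ K)) (hφ : ∀ x y, φ (mulZ c x y) = mulZ c' (φ x) (φ y))
    (hc' : ∀ a b, c' b a = ε * c' a b) (a b : ℤ) :
    c b a = ε * c a b := by
  have hswap : ∀ x y, mulZ c y x = ε • mulZ c x y := fun x y =>
    φ.injective (by rw [hφ, map_smul, hφ, mulZ_swap hc'])
  have := congrArg (· (a + b)) (hswap (single a 1) (single b 1))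
  simpa [mulZ_single, add_comm b a] using this

lemma c2_swap (a b : ℤ) : c2 K b a = -1 * c2 K a b := by
  unfold c2
  rcases Int.emod_two_eq a with ha | ha <;> rcases Int.emod_two_eq b with hb | hb <;>
    simp [ha, hb]

lemma c3_swap (a b : ℤ) : c3 K b a = 1 * c3 K a b := by
  unfold c3
  rcases Int.emod_two_eq a with ha | ha <;> rcases Int.emod_two_eq b with hb | hb <;>
    simp [ha, hb]

end

/-- the three `2ℤ`-periodic Leibniz algebras `L₁, L₂, L₃` are pairwise
non-isomorphic (char K ≠ 2). -/
theorem stmt12 {K : Type*} [Field K] (h2 : (2 : K) ≠ 0) :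
    (¬ ∃ φ : (ℤ →₀ K) ≃ₗ[K] (ℤ →₀ K),
        ∀ x y : ℤ →₀ K, φ (mulZ (c1 K) x y) = mulZ (c2 K) (φ x) (φ y)) ∧
    (¬ ∃ φ : (ℤ →₀ K) ≃ₗ[K] (ℤ →₀ K),
        ∀ x y : ℤ →₀ K, φ (mulZ (c1 K) x y) = mulZ (c3 K) (φ x) (φ y)) ∧
    (¬ ∃ φ : (ℤ →₀ K) ≃ₗ[K] (ℤ →₀ K),
        ∀ x y : ℤ →₀ K, φ (mulZ (c2 K) x y) = mulZ (c3 K) (φ x) (φ y)) := by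
  refine ⟨?_, ?_, ?_⟩ <;> rintro ⟨φ, hφ⟩
  · have h := swap_eq_mul_of_mulZ_linearEquiv φ hφ c2_swap 1 0
    simp [c1] at h
  · have h := swap_eq_mul_of_mulZ_linearEquiv φ hφ c3_swap 1 0
    simp [c1] at h
  · have h := swap_eq_mul_of_mulZ_linearEquiv φ hφ c3_swap 1 0
    rw [show c2 K 0 1 = -1 by simp [c2], show c2 K 1 0 = 1 by simp [c2]] at h
    exact h2 (by linear_combination -h)
end

section
/- In an nℤ-periodic algebra L with structure matrix (α_{ij}), the basis element e_{nk+i} with i ≢ 0 (mod n) and gcd(i,n)=1 is right nilpotent if and only if some entry of the i-th column of (α_{ij}) is zero; specifically, e_{nk+i}^{(n+1)_r} = α_{0,i}α_{1,i}⋯α_{n−1,i}·e_{n(nk+k+i)+i}, where x^{(m)_r} denotes the left-normed right power (…((xx)x)…)x with m factors. -/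
open Finsupp

/-- Multiplication of an `nℤ`-periodic algebra with structure matrix `α`. -/
noncomputable def mulN {K : Type*} [Field K] (n : ℕ) (α : ZMod n → ZMod n → K)
    (x y : ℤ →₀ K) : ℤ →₀ K :=
  x.sum fun a xa => y.sum fun b yb =>
    Finsupp.single (a + b) (xa * yb * α (a : ZMod n) (b : ZMod n))

/-- Left-normed right powers: `rpowN n α x m = x^{(m+1)_r}`, i.e.
`rpowN … 0 = x` and `rpowN … (m+1) = (rpowN … m) · x`. -/
noncomputable def rpowN {K : Type*} [Field K] (n : ℕ) (α : ZMod n → ZMod n → K)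
    (x : ℤ →₀ K) : ℕ → ℤ →₀ K
  | 0 => x
  | m + 1 => mulN n α (rpowN n α x m) x

/-!
By induction `e_a^{(m+1)_r} = (∏_{j<m} α_{(j+1)a, a}) e_{(m+1)a}`, so a right power of `e_a` vanishes
exactly when one of these coefficients does. For `a = nk + i` with `i` a unit mod `n`, the row
indices `(j+1)a`, `j < n`, run over all of `ZMod n`, so the coefficient of the `(n+1)`-st power is
the full product of the `i`-th column; conversely every coefficient is a product of entries of
that column.
-/

open Finset

section PeriodicAlgebra

variable {K : Type*} [Field K] (n : ℕ) (α : ZMod n → ZMod n → K)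

lemma mulN_single_single (a b : ℤ) (c d : K) :
    mulN n α (single a c) (single b d) = single (a + b) (c * d * α a b) := by
  rw [mulN, sum_single_index, sum_single_index] <;> simp

lemma rpowN_single (a : ℤ) (c : K) (m : ℕ) :
    rpowN n α (single a c) m =
      single ((m + 1) * a) (c ^ (m + 1) * ∏ j ∈ range m, α (((j : ZMod n) + 1) * a) a) := by
  induction m with
  | zero => simp [rpowN]
  | succ m ih =>
    rw [rpowN, ih, mulN_single_single, prod_range_succ]
    congr 1
    · push_cast; ring
    · push_cast; ring

end PeriodicAlgebra

lemma ZMod.prod_range_natCast {M : Type*} [CommMonoid M] (n : ℕ) [NeZero n] (g : ZMod n → M) :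
    ∏ j ∈ range n, g j = ∏ x : ZMod n, g x := by
  refine prod_nbij' (fun j => (j : ZMod n)) ZMod.val (fun _ _ => mem_univ _)
    (fun x _ => mem_range.2 x.val_lt) (fun j hj => ZMod.val_cast_of_lt (mem_range.1 hj))
    (fun x _ => ZMod.natCast_zmod_val x) (fun _ _ => rfl)

lemma ZMod.prod_range_succ_mul_unit {M : Type*} [CommMonoid M] (n : ℕ) [NeZero n]
    (u : (ZMod n)ˣ) (g : ZMod n → M) :
    ∏ j ∈ range n, g (((j : ZMod n) + 1) * u) = ∏ x : ZMod n, g x := by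
  rw [ZMod.prod_range_natCast n fun x => g ((x + 1) * u)]
  exact Fintype.prod_equiv ((Equiv.addRight 1).trans (Units.mulRight u)) _ _ fun _ => rfl

theorem stmt15_general {K : Type*} [Field K] (n : ℕ) (hn : 0 < n) (α : ZMod n → ZMod n → K)
    (k i : ℤ) (hcop : IsCoprime i (n : ℤ)) :
    rpowN n α (Finsupp.single ((n : ℤ) * k + i) (1 : K)) n =
        (∏ j ∈ Finset.range n, α ((j : ℤ) : ZMod n) (i : ZMod n)) •
          Finsupp.single ((n : ℤ) * ((n : ℤ) * k + k + i) + i) (1 : K) ∧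
      ((∃ m : ℕ, rpowN n α (Finsupp.single ((n : ℤ) * k + i) (1 : K)) m = 0) ↔
        ∃ j : ZMod n, α j (i : ZMod n) = 0) := by
  have : NeZero n := ⟨hn.ne'⟩
  have hcast : (((n : ℤ) * k + i : ℤ) : ZMod n) = i := by simp
  have hunit : IsUnit (i : ZMod n) := (ZMod.coe_int_isUnit_iff_isCoprime i n).2 hcop.symm
  have hcolumn : ∏ j ∈ range n, α (((j : ZMod n) + 1) * i) i = ∏ x, α x i := by
    simpa using ZMod.prod_range_succ_mul_unit n hunit.unit (α · i)
  have hcolumn_range : ∏ j ∈ range n, α ((j : ℤ) : ZMod n) i = ∏ x, α x i := by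
    simpa using ZMod.prod_range_natCast n (α · i)
  simp only [rpowN_single, hcast, one_pow, one_mul, single_eq_zero]
  refine ⟨?_, ⟨fun ⟨m, hm⟩ => ?_, fun ⟨j, hj⟩ => ⟨n, ?_⟩⟩⟩
  · rw [hcolumn, ← hcolumn_range, smul_single, smul_eq_mul, mul_one]
    congr 1
    ring
  · obtain ⟨j, -, hj⟩ := prod_eq_zero_iff.1 hm
    exact ⟨_, hj⟩
  · rw [hcolumn]
    exact prod_eq_zero (mem_univ j) hj

/-- for `i ≢ 0 (mod n)` with `gcd(i,n) = 1`,
`e_{nk+i}^{(n+1)_r} = α_{0,i} α_{1,i} ⋯ α_{n−1,i} · e_{n(nk+k+i)+i}`, and `e_{nk+i}` is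
right nilpotent iff some entry of the `i`-th column of `α` is zero. -/
theorem stmt15 {K : Type*} [Field K] (n : ℕ) (hn : 0 < n) (α : ZMod n → ZMod n → K)
    (k i : ℤ) (hi0 : ¬ ((n : ℤ) ∣ i)) (hcop : IsCoprime i (n : ℤ)) :
    rpowN n α (Finsupp.single ((n : ℤ) * k + i) (1 : K)) n =
        (∏ j ∈ Finset.range n, α ((j : ℤ) : ZMod n) (i : ZMod n)) •
          Finsupp.single ((n : ℤ) * ((n : ℤ) * k + k + i) + i) (1 : K) ∧
      ((∃ m : ℕ, rpowN n α (Finsupp.single ((n : ℤ) * k + i) (1 : K)) m = 0) ↔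
        ∃ j : ZMod n, α j (i : ZMod n) = 0) :=
  stmt15_general n hn α k i hcop
end
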